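/- The resumption monad R inherits semi-additivity: defining ∅_ν = tuo(δ) and p +_ν q = tuo(ϖ(out p, out q)), each RA becomes a bounded join-semilattice (+_ν is associative, commutative, idempotent, with unit ∅_ν), and the bind of R preserves ∅_ν and +_ν in its first argument. -/

import Mathlib

/-! `tuo` and `out` are mutually inverse, so the semilattice laws of `T` transfer to `R A`
along them. For the bind equations apply the injective `out` to both sides: the corecursive
equation of `Rbind` unfolds one step, and `δ` absorbing `>>=` and `ϖ` distributing over it
finish the argument. -/

theorem resumption_semiAdditive
    (m : Type u → Type u) [Monad m]
    -- `T` is semi-additive, with join structure `(δ, ϖ)`: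
    (bot : ∀ A : Type u, m A) (join : ∀ {A : Type u}, m A → m A → m A)
    (join_assoc : ∀ {A : Type u} (p q r : m A), join p (join q r) = join (join p q) r)
    (join_comm : ∀ {A : Type u} (p q : m A), join p q = join q p)
    (join_idem : ∀ {A : Type u} (p : m A), join p p = p)
    (join_bot : ∀ {A : Type u} (p : m A), join p (bot A) = p)
    (bind_bot : ∀ {A B : Type u} (f : A → m B), (bot A) >>= f = bot B)
    (bind_join : ∀ {A B : Type u} (p q : m A) (f : A → m B),
      (join p q) >>= f = join (p >>= f) (q >>= f))
    -- the resumption monad `R A = νγ.T(γ + A)`: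
    (R : Type u → Type u)
    (out : {A : Type u} → R A → m (R A ⊕ A))
    (tuo : {A : Type u} → m (R A ⊕ A) → R A)
    (tuo_out : ∀ {A : Type u} (r : R A), tuo (out r) = r)
    (out_tuo : ∀ {A : Type u} (p : m (R A ⊕ A)), out (tuo p) = p)
    -- the bind of `R`, defined by corecursion:
    (Rbind : {A B : Type u} → R A → (A → R B) → R B)
    (hRbind : ∀ {A B : Type u} (p : R A) (f : A → R B),
      out (Rbind p f) = out p >>= fun z =>
        match z with
        | Sum.inl r => pure (Sum.inl (Rbind r f))
        | Sum.inr a => out (f a)) :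
    -- `∅_ν := tuo δ` and `p +_ν q := tuo (ϖ (out p) (out q))` make each `RA`
    -- a bounded join-semilattice:
    (∀ {A : Type u} (p q r : R A),
      tuo (join (out p) (out (tuo (join (out q) (out r))))) =
        tuo (join (out (tuo (join (out p) (out q)))) (out r))) ∧
    (∀ {A : Type u} (p q : R A),
      tuo (join (out p) (out q)) = tuo (join (out q) (out p))) ∧
    (∀ {A : Type u} (p : R A), tuo (join (out p) (out p)) = p) ∧
    (∀ {A : Type u} (p : R A),
      tuo (join (out p) (out (tuo (bot (R A ⊕ A))))) = p) ∧
    -- and the bind of `R` preserves `∅_ν` and `+_ν` in its first argument: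
    (∀ {A B : Type u} (f : A → R B),
      Rbind (tuo (bot (R A ⊕ A))) f = tuo (bot (R B ⊕ B))) ∧
    (∀ {A B : Type u} (p q : R A) (f : A → R B),
      Rbind (tuo (join (out p) (out q))) f =
        tuo (join (out (Rbind p f)) (out (Rbind q f)))) := by
  have out_injective : ∀ {A : Type u}, Function.Injective (@out A) :=
    fun {_} => Function.LeftInverse.injective tuo_out
  refine ⟨fun p q r => ?_, fun p q => ?_, fun p => ?_, fun p => ?_, fun f => ?_,
    fun p q f => ?_⟩
  · rw [out_tuo, out_tuo, join_assoc]
  · rw [join_comm]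
  · rw [join_idem, tuo_out]
  · rw [out_tuo, join_bot, tuo_out]
  · apply out_injective
    rw [hRbind, out_tuo, out_tuo, bind_bot]
  · apply out_injective
    rw [hRbind, out_tuo, out_tuo, bind_join, ← hRbind, ← hRbind]
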